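/- Let γ > 0 and let L(n) : B^γ → X (n ≥ 0) be bounded linear operators satisfying condition (★). Then the following are equivalent: (i) the homogeneous system x(n+1) = L(n)x_n is uniformly exponentially stable in B^γ; (ii) the subdiagonal system associated with L is uniformly exponentially stable in B^γ; (iii) for every δ > 0 and every family of bounded linear operators L̃(n) : B^δ → X (n ≥ 0) such that L̃_sub(n) = L_sub(n) for all n ≥ 0 and such that sup_{n ≥ 0} ‖L̃(n)P_{[−∞,l]}‖_{B^δ→X} < ∞ for some l ≤ 0, the homogeneous system defined by L̃ is uniformly exponentially stable in B^δ. -/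

import Mathlib

open scoped ENNReal
open MeasureTheory

namespace BP

variable {X : Type*} [NormedAddCommGroup X] [NormedSpace ℝ X] [CompleteSpace X]

/-- Weighted coordinate size: index `k : ℕ` represents the coordinate `−k ≤ 0`,
so the weight `e^{γ m}` becomes `e^{−γ k}`. -/
noncomputable def wnorm (γ : ℝ) (φ : ℕ → X) (k : ℕ) : ℝ := ‖φ k‖ * Real.exp (-(γ * k))

/-- Membership in the phase space `B^γ`. -/
def MemB (γ : ℝ) (φ : ℕ → X) : Prop := BddAbove (Set.range (wnorm γ φ))

/-- The `B^γ` norm `|φ|_{B^γ} = sup_{m ≤ 0} ‖φ(m)‖ e^{γ m}`. -/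
noncomputable def Bnorm (γ : ℝ) (φ : ℕ → X) : ℝ := ⨆ k, wnorm γ φ k

/-- The history `x_n` of `x : ℤ → X` at time `n` : coordinate `−k` is `x (n − k)`. -/
def hist (x : ℤ → X) (n : ℤ) : ℕ → X := fun k => x (n - k)

/-- `x = x(·, τ, φ; f)` is the solution of `x(n+1) = L(n) x_n + f(n)` (`n ≥ τ`), `x_τ = φ`. -/
def IsSolution (L : ℕ → ((ℕ → X) →ₗ[ℝ] X)) (f : ℕ → X) (τ : ℕ) (φ : ℕ → X)
    (x : ℤ → X) : Prop :=
  (∀ k : ℕ, x ((τ : ℤ) - k) = φ k) ∧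
  (∀ n : ℕ, τ ≤ n → x ((n : ℤ) + 1) = L n (hist x (n : ℤ)) + f n)

/-- Restriction of `x : ℤ → X` to `ℤ≥0`. -/
def restrict (x : ℤ → X) : ℕ → X := fun n => x (n : ℤ)

/-- The `ℓ^p(ℤ≥0, X)` norm (valued in `ℝ≥0∞`). -/
noncomputable def lpNorm (p : ℝ≥0∞) {E : Type*} [NormedAddCommGroup E] (f : ℕ → E) : ℝ≥0∞ :=
  eLpNorm f p Measure.count

/-- `L(n)` is a bounded operator from `B^γ` to `X`. -/
def OpBounded (γ : ℝ) (T : (ℕ → X) →ₗ[ℝ] X) : Prop :=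
  ∃ C : ℝ, ∀ φ : ℕ → X, MemB γ φ → ‖T φ‖ ≤ C * Bnorm γ φ

/-- The projection `P_{[−∞,−j]}` : keeps coordinates `−k` with `k ≥ j`. -/
def Ptail (j : ℕ) : (ℕ → X) →ₗ[ℝ] (ℕ → X) where
  toFun φ := fun k => if j ≤ k then φ k else 0
  map_add' φ ψ := by funext k; by_cases h : j ≤ k <;> simp [h]
  map_smul' c φ := by funext k; by_cases h : j ≤ k <;> simp [h]

/-- The projection `P_{[−j,0]}` : keeps coordinates `−k` with `k ≤ j`. -/
def Phead (j : ℕ) : (ℕ → X) →ₗ[ℝ] (ℕ → X) where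
  toFun φ := fun k => if k ≤ j then φ k else 0
  map_add' φ ψ := by funext k; by_cases h : k ≤ j <;> simp [h]
  map_smul' c φ := by funext k; by_cases h : k ≤ j <;> simp [h]

/-- `E_{−j} : X → B^γ`, placing `ψ` at coordinate `−j`. -/
def Ecoord (j : ℕ) : X →ₗ[ℝ] (ℕ → X) where
  toFun ψ := fun k => if k = j then ψ else 0
  map_add' ψ χ := by funext k; by_cases h : k = j <;> simp [h]
  map_smul' c ψ := by funext k; by_cases h : k = j <;> simp [h]

/-- The backward shift `S`. -/
def shiftS : (ℕ → X) →ₗ[ℝ] (ℕ → X) where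
  toFun φ := fun k => if k = 0 then 0 else φ (k - 1)
  map_add' φ ψ := by funext k; by_cases h : k = 0 <;> simp [h]
  map_smul' c φ := by funext k; by_cases h : k = 0 <;> simp [h]

/-- `D(n) = E₀ ∘ L(n) + S`. -/
def Dop (L : ℕ → ((ℕ → X) →ₗ[ℝ] X)) (n : ℕ) : (ℕ → X) →ₗ[ℝ] (ℕ → X) :=
  (Ecoord 0).comp (L n) + shiftS

/-- `h = H g`, `h(n) = Σ_{k=0}^{n−1} S^{n−k−1} (I − P₀) g(k)`. -/
noncomputable def Hop (g : ℕ → (ℕ → X)) : ℕ → (ℕ → X) :=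
  fun n => ∑ k ∈ Finset.range n,
    ((shiftS ^ (n - k - 1) : (ℕ → X) →ₗ[ℝ] (ℕ → X))
      ((LinearMap.id - Phead 0 : (ℕ → X) →ₗ[ℝ] (ℕ → X)) (g k)))

/-- `(ℓ^p, ℓ^q)`-stability of the nonhomogeneous system. -/
def lplqStable (L : ℕ → ((ℕ → X) →ₗ[ℝ] X)) (p q : ℝ≥0∞) : Prop :=
  ∀ f : ℕ → X, lpNorm p f < ∞ → ∀ x : ℤ → X, IsSolution L f 0 0 x →
    lpNorm q (restrict x) < ∞

/-- Uniform exponential stability in `X` w.r.t. `B^γ`. -/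
def UESinX (γ : ℝ) (L : ℕ → ((ℕ → X) →ₗ[ℝ] X)) : Prop :=
  ∃ K : ℝ, 1 ≤ K ∧ ∃ ν : ℝ, 0 < ν ∧
    ∀ (τ : ℕ) (φ : ℕ → X), MemB γ φ → ∀ x : ℤ → X, IsSolution L 0 τ φ x →
      ∀ n : ℕ, τ ≤ n → ‖x (n : ℤ)‖ ≤ K * Real.exp (-(ν * ((n : ℝ) - (τ : ℝ)))) * Bnorm γ φ

/-- Uniform exponential stability in `B^γ`. -/
def UESinB (γ : ℝ) (L : ℕ → ((ℕ → X) →ₗ[ℝ] X)) : Prop :=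
  ∃ K : ℝ, 1 ≤ K ∧ ∃ ν : ℝ, 0 < ν ∧
    ∀ (τ : ℕ) (φ : ℕ → X), MemB γ φ → ∀ x : ℤ → X, IsSolution L 0 τ φ x →
      ∀ n : ℕ, τ ≤ n →
        Bnorm γ (hist x (n : ℤ)) ≤ K * Real.exp (-(ν * ((n : ℝ) - (τ : ℝ)))) * Bnorm γ φ

/-- Uniform stability in `X` w.r.t. `B^γ`. -/
def USinX (γ : ℝ) (L : ℕ → ((ℕ → X) →ₗ[ℝ] X)) : Prop :=
  ∃ K : ℝ, 1 ≤ K ∧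
    ∀ (τ : ℕ) (φ : ℕ → X), MemB γ φ → ∀ x : ℤ → X, IsSolution L 0 τ φ x →
      ∀ n : ℕ, τ ≤ n → ‖x (n : ℤ)‖ ≤ K * Bnorm γ φ

/-- Uniform stability in `B^γ`. -/
def USinB (γ : ℝ) (L : ℕ → ((ℕ → X) →ₗ[ℝ] X)) : Prop :=
  ∃ K : ℝ, 1 ≤ K ∧
    ∀ (τ : ℕ) (φ : ℕ → X), MemB γ φ → ∀ x : ℤ → X, IsSolution L 0 τ φ x →
      ∀ n : ℕ, τ ≤ n → Bnorm γ (hist x (n : ℤ)) ≤ K * Bnorm γ φ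

/-- Condition (★): there exists `m ≤ 0` (here `m = −j`, `j : ℕ`) such that
`sup_{n ≥ 0} ‖L(n) P_{[−∞,m]}‖_{B^γ→X} < ∞`. -/
def StarCond (γ : ℝ) (L : ℕ → ((ℕ → X) →ₗ[ℝ] X)) : Prop :=
  ∃ (j : ℕ) (C : ℝ), ∀ (n : ℕ) (φ : ℕ → X), MemB γ φ → ‖L n (Ptail j φ)‖ ≤ C * Bnorm γ φ

/-- `z` solves the first order system `z(n+1) = A(n) z(n)` (`n ≥ τ`), `z(τ) = ψ`. -/
def IsFOSol (A : ℕ → ((ℕ → X) →ₗ[ℝ] (ℕ → X))) (τ : ℕ) (ψ : ℕ → X)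
    (z : ℕ → (ℕ → X)) : Prop :=
  z τ = ψ ∧ ∀ n : ℕ, τ ≤ n → z (n + 1) = A n (z n)

/-- Uniform exponential stability of the first order system in `B^γ`. -/
def FOUES (γ : ℝ) (A : ℕ → ((ℕ → X) →ₗ[ℝ] (ℕ → X))) : Prop :=
  ∃ K : ℝ, 1 ≤ K ∧ ∃ ν : ℝ, 0 < ν ∧
    ∀ (τ : ℕ) (ψ : ℕ → X), MemB γ ψ → ∀ z : ℕ → (ℕ → X), IsFOSol A τ ψ z →
      ∀ n : ℕ, τ ≤ n →
        Bnorm γ (z n) ≤ K * Real.exp (-(ν * ((n : ℝ) - (τ : ℝ)))) * Bnorm γ ψ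

/-- Uniform stability of the first order system in `B^γ`. -/
def FOUS (γ : ℝ) (A : ℕ → ((ℕ → X) →ₗ[ℝ] (ℕ → X))) : Prop :=
  ∃ K : ℝ, 1 ≤ K ∧
    ∀ (τ : ℕ) (ψ : ℕ → X), MemB γ ψ → ∀ z : ℕ → (ℕ → X), IsFOSol A τ ψ z →
      ∀ n : ℕ, τ ≤ n → Bnorm γ (z n) ≤ K * Bnorm γ ψ

/-- The associated subdiagonal system: `L_sub(0) = 0`, `L_sub(n) = L(n) P_{[−n+1,0]}`. -/
def Lsub (L : ℕ → ((ℕ → X) →ₗ[ℝ] X)) : ℕ → ((ℕ → X) →ₗ[ℝ] X) :=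
  fun n => if n = 0 then 0 else (L n).comp (Phead (n - 1))

/-- The system has bounded delay of order `d`. -/
def BoundedDelay (L : ℕ → ((ℕ → X) →ₗ[ℝ] X)) (d : ℕ) : Prop :=
  ∀ n : ℕ, ∃ A : Fin d → (X →L[ℝ] X), ∀ φ : ℕ → X, L n φ = ∑ k : Fin d, A k (φ k)

set_option linter.unusedSectionVars false
/-! ### Auxiliary lemmas -/

lemma Ptail_apply (j : ℕ) (φ : ℕ → X) (k : ℕ) :
    Ptail j φ k = if j ≤ k then φ k else 0 := rfl

lemma Phead_apply (j : ℕ) (φ : ℕ → X) (k : ℕ) :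
    Phead j φ k = if k ≤ j then φ k else 0 := rfl

lemma Ecoord_apply (j : ℕ) (v : X) (k : ℕ) :
    Ecoord j v k = if k = j then v else 0 := rfl

lemma wnorm_nonneg (γ : ℝ) (φ : ℕ → X) (k : ℕ) : 0 ≤ wnorm γ φ k :=
  mul_nonneg (norm_nonneg _) (Real.exp_pos _).le

lemma Bnorm_nonneg (γ : ℝ) (φ : ℕ → X) : 0 ≤ Bnorm γ φ :=
  Real.iSup_nonneg (wnorm_nonneg γ φ)

lemma wnorm_le_Bnorm {γ : ℝ} {φ : ℕ → X} (h : MemB γ φ) (k : ℕ) :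
    wnorm γ φ k ≤ Bnorm γ φ := le_ciSup h k

lemma Bnorm_le {γ : ℝ} {φ : ℕ → X} {a : ℝ} (h : ∀ k, wnorm γ φ k ≤ a) :
    Bnorm γ φ ≤ a := ciSup_le h

lemma memB_of_bound {γ : ℝ} {φ : ℕ → X} {a : ℝ} (h : ∀ k, wnorm γ φ k ≤ a) :
    MemB γ φ := ⟨a, by rintro y ⟨k, rfl⟩; exact h k⟩

lemma memB_of_finsupp {γ : ℝ} {φ : ℕ → X} {N : ℕ} (h : ∀ k, N ≤ k → φ k = 0) :
    MemB γ φ := by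
  refine memB_of_bound (a := ∑ i ∈ Finset.range N, wnorm γ φ i) (fun k => ?_)
  by_cases hk : N ≤ k
  · have : wnorm γ φ k = 0 := by simp [wnorm, h k hk]
    rw [this]
    exact Finset.sum_nonneg fun i _ => wnorm_nonneg _ _ _
  · exact Finset.single_le_sum (fun i _ => wnorm_nonneg γ φ i)
      (Finset.mem_range.mpr (by omega))

lemma Bnorm_Ecoord_le (γ : ℝ) (v : X) : Bnorm γ (Ecoord 0 v) ≤ ‖v‖ := by
  refine Bnorm_le fun k => ?_
  rcases eq_or_ne k 0 with rfl | hk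
  · simp [wnorm, Ecoord_apply]
  · simp [wnorm, Ecoord_apply, hk]

/-! ### Construction of solutions of the homogeneous system -/

noncomputable def histSeq (L : ℕ → ((ℕ → X) →ₗ[ℝ] X)) (τ : ℕ) (φ : ℕ → X) : ℕ → (ℕ → X)
  | 0 => φ
  | (m+1) => fun k => if k = 0 then L (τ + m) (histSeq L τ φ m) else histSeq L τ φ m (k-1)

noncomputable def mkSol (L : ℕ → ((ℕ → X) →ₗ[ℝ] X)) (τ : ℕ) (φ : ℕ → X) : ℤ → X :=
  fun t => if t ≤ (τ:ℤ) then φ (τ - t).toNat else histSeq L τ φ (t - τ).toNat 0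

lemma mkSol_hist (L : ℕ → ((ℕ → X) →ₗ[ℝ] X)) (τ : ℕ) (φ : ℕ → X) :
    ∀ m : ℕ, hist (mkSol L τ φ) ((τ:ℤ) + m) = histSeq L τ φ m := by
  intro m
  induction m with
  | zero =>
    funext k
    show mkSol L τ φ ((τ:ℤ) + 0 - k) = φ k
    rw [mkSol, if_pos (by omega)]
    congr 1
    omega
  | succ m ih =>
    funext k
    rcases eq_or_ne k 0 with rfl | hk
    · show mkSol L τ φ ((τ:ℤ) + (m+1) - 0) = histSeq L τ φ (m+1) 0
      rw [mkSol, if_neg (by push_cast; omega)]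
      congr 1
      omega
    · show mkSol L τ φ ((τ:ℤ) + (m+1) - k) = histSeq L τ φ (m+1) k
      have h1 : ((τ:ℤ) + (m+1) - k) = (τ:ℤ) + m - (k-1 : ℕ) := by push_cast; omega
      have h2 : histSeq L τ φ (m+1) k = histSeq L τ φ m (k-1) := by
        show (if k = 0 then _ else _) = _
        rw [if_neg hk]
      rw [h1, h2, ← ih]
      rfl

lemma mkSol_isSol (L : ℕ → ((ℕ → X) →ₗ[ℝ] X)) (τ : ℕ) (φ : ℕ → X) :
    IsSolution L 0 τ φ (mkSol L τ φ) := by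
  constructor
  · intro k
    rw [mkSol, if_pos (by omega)]
    congr 1
    omega
  · intro n hn
    have hmk := mkSol_hist L τ φ (n - τ)
    have hτn : (τ:ℤ) + ((n - τ : ℕ) : ℤ) = n := by omega
    rw [hτn] at hmk
    have : mkSol L τ φ ((n:ℤ)+1) = histSeq L τ φ (n - τ + 1) 0 := by
      rw [mkSol, if_neg (by omega)]
      congr 1
      omega
    rw [this, hmk]
    show L (τ + (n - τ)) (histSeq L τ φ (n - τ)) = _
    rw [← hmk, show τ + (n - τ) = n by omega]
    simp
/-! ### Subdiagonal helpers -/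

lemma wnorm_mono {γ : ℝ} {φ ψ : ℕ → X} (h : ∀ k, ‖φ k‖ ≤ ‖ψ k‖) (k : ℕ) :
    wnorm γ φ k ≤ wnorm γ ψ k :=
  mul_le_mul_of_nonneg_right (h k) (Real.exp_pos _).le

lemma norm_Phead_le (j : ℕ) (φ : ℕ → X) (k : ℕ) : ‖Phead j φ k‖ ≤ ‖φ k‖ := by
  rw [Phead_apply]; split <;> simp

lemma norm_Ptail_le (j : ℕ) (φ : ℕ → X) (k : ℕ) : ‖Ptail j φ k‖ ≤ ‖φ k‖ := by
  rw [Ptail_apply]; split <;> simp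

lemma memB_Phead {γ : ℝ} {φ : ℕ → X} (h : MemB γ φ) (j : ℕ) : MemB γ (Phead j φ) := by
  obtain ⟨b, hb⟩ := h
  exact memB_of_bound (a := b) fun k =>
    (wnorm_mono (norm_Phead_le j φ) k).trans (hb ⟨k, rfl⟩)

lemma memB_Ptail {γ : ℝ} {φ : ℕ → X} (h : MemB γ φ) (j : ℕ) : MemB γ (Ptail j φ) := by
  obtain ⟨b, hb⟩ := h
  exact memB_of_bound (a := b) fun k =>
    (wnorm_mono (norm_Ptail_le j φ) k).trans (hb ⟨k, rfl⟩)

lemma Bnorm_Phead_le {γ : ℝ} {φ : ℕ → X} (h : MemB γ φ) (j : ℕ) :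
    Bnorm γ (Phead j φ) ≤ Bnorm γ φ :=
  Bnorm_le fun k => (wnorm_mono (norm_Phead_le j φ) k).trans (wnorm_le_Bnorm h k)

lemma Bnorm_Ptail_le {γ : ℝ} {φ : ℕ → X} (h : MemB γ φ) (j : ℕ) :
    Bnorm γ (Ptail j φ) ≤ Bnorm γ φ :=
  Bnorm_le fun k => (wnorm_mono (norm_Ptail_le j φ) k).trans (wnorm_le_Bnorm h k)

lemma opBounded_Lsub {γ : ℝ} {L : ℕ → ((ℕ → X) →ₗ[ℝ] X)}
    (hL : ∀ n, OpBounded γ (L n)) (n : ℕ) : OpBounded γ (Lsub L n) := by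
  rcases eq_or_ne n 0 with rfl | hn
  · exact ⟨0, fun φ _ => by simp [Lsub]⟩
  · obtain ⟨C, hC⟩ := hL n
    refine ⟨max C 0, fun φ hφ => ?_⟩
    have h1 : Lsub L n φ = L n (Phead (n-1) φ) := by simp [Lsub, hn]
    calc ‖Lsub L n φ‖ = ‖L n (Phead (n-1) φ)‖ := by rw [h1]
      _ ≤ C * Bnorm γ (Phead (n-1) φ) := hC _ (memB_Phead hφ _)
      _ ≤ max C 0 * Bnorm γ (Phead (n-1) φ) :=
          mul_le_mul_of_nonneg_right (le_max_left _ _) (Bnorm_nonneg _ _)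
      _ ≤ max C 0 * Bnorm γ φ :=
          mul_le_mul_of_nonneg_left (Bnorm_Phead_le hφ _) (le_max_right _ _)

lemma star_Lsub {γ : ℝ} {L : ℕ → ((ℕ → X) →ₗ[ℝ] X)} (hstar : StarCond γ L) :
    StarCond γ (Lsub L) := by
  obtain ⟨j, C, hC⟩ := hstar
  refine ⟨j, 2 * max C 0, fun n φ hφ => ?_⟩
  have hB0 := Bnorm_nonneg γ φ
  rcases eq_or_ne n 0 with rfl | hn
  · have h0 : Lsub L 0 = (0 : (ℕ → X) →ₗ[ℝ] X) := by simp [Lsub]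
    rw [h0]
    simp only [LinearMap.zero_apply, norm_zero]
    have : (0:ℝ) ≤ 2 * max C 0 := by positivity
    exact mul_nonneg this hB0
  · have h1 : Lsub L n (Ptail j φ) = L n (Phead (n-1) (Ptail j φ)) := by simp [Lsub, hn]
    have h2 : Phead (n-1) (Ptail j φ) = Ptail j φ - Ptail j (Ptail n φ) := by
      funext k
      simp only [Phead_apply, Ptail_apply, Pi.sub_apply]
      by_cases hj : j ≤ k
      · by_cases hnk : n ≤ k
        · have h3 : ¬ (k ≤ n - 1) := by omega
          rw [if_neg h3, if_pos hj, if_pos hj, if_pos hnk, sub_self]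
        · have h3 : k ≤ n - 1 := by omega
          rw [if_pos h3, if_pos hj, if_pos hj, if_neg hnk, sub_zero]
      · rw [if_neg hj, if_neg hj, sub_zero, ite_self]
    have h4 : C * Bnorm γ φ ≤ max C 0 * Bnorm γ φ :=
      mul_le_mul_of_nonneg_right (le_max_left _ _) hB0
    have h5 : C * Bnorm γ (Ptail n φ) ≤ max C 0 * Bnorm γ φ :=
      le_trans (mul_le_mul_of_nonneg_right (le_max_left _ _) (Bnorm_nonneg _ _))
        (mul_le_mul_of_nonneg_left (Bnorm_Ptail_le hφ n) (le_max_right _ _))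
    calc ‖Lsub L n (Ptail j φ)‖ = ‖L n (Ptail j φ) - L n (Ptail j (Ptail n φ))‖ := by
          rw [h1, h2, map_sub]
      _ ≤ ‖L n (Ptail j φ)‖ + ‖L n (Ptail j (Ptail n φ))‖ := norm_sub_le _ _
      _ ≤ C * Bnorm γ φ + C * Bnorm γ (Ptail n φ) :=
          add_le_add (hC n φ hφ) (hC n (Ptail n φ) (memB_Ptail hφ n))
      _ ≤ max C 0 * Bnorm γ φ + max C 0 * Bnorm γ φ := add_le_add h4 h5
      _ = 2 * max C 0 * Bnorm γ φ := by ring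

lemma Lsub_idem (L : ℕ → ((ℕ → X) →ₗ[ℝ] X)) (n : ℕ) :
    Lsub (Lsub L) n = Lsub L n := by
  rcases eq_or_ne n 0 with rfl | hn
  · simp [Lsub]
  · refine LinearMap.ext fun φ => ?_
    have hP : Phead (n-1) (Phead (n-1) φ) = Phead (n-1) φ := by
      funext k
      simp only [Phead_apply]
      split <;> simp_all
    simp only [Lsub, if_neg hn, LinearMap.comp_apply, hP]

lemma apply_eq_of_sub {M L' : ℕ → ((ℕ → X) →ₗ[ℝ] X)}
    (hsub : ∀ n, Lsub L' n = Lsub M n) {n : ℕ} (hn : n ≠ 0) {ψ : ℕ → X}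
    (hψ : ∀ k, n ≤ k → ψ k = 0) : L' n ψ = M n ψ := by
  have hP : Phead (n-1) ψ = ψ := by
    funext k
    rw [Phead_apply]
    split
    · rfl
    · rw [hψ k (by omega)]
  have e1 : L' n ψ = Lsub L' n ψ := by rw [Lsub, if_neg hn, LinearMap.comp_apply, hP]
  have e2 : Lsub M n ψ = M n ψ := by rw [Lsub, if_neg hn, LinearMap.comp_apply, hP]
  rw [e1, hsub, e2]

/-! ### Uniform operator bound from UES -/

lemma uniformOpBound {γ : ℝ} (hγ : 0 < γ) {M : ℕ → ((ℕ → X) →ₗ[ℝ] X)}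
    (hM : UESinB γ M) :
    ∃ K : ℝ, 1 ≤ K ∧ ∀ (n : ℕ) (φ : ℕ → X), MemB γ φ → ‖M n φ‖ ≤ K * Bnorm γ φ := by
  obtain ⟨K, hK1, ν, hν, h⟩ := hM
  refine ⟨K, hK1, fun n φ hφ => ?_⟩
  set x := mkSol M n φ with hxdef
  have sol : IsSolution M 0 n φ x := mkSol_isSol M n φ
  have hx : hist x (n:ℤ) = φ := funext fun k => sol.1 k
  have heq : x ((n:ℤ)+1) = M n φ := by
    rw [sol.2 n le_rfl, hx]
    simp
  obtain ⟨b, hb⟩ := id hφ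
  have hbk : ∀ k, wnorm γ φ k ≤ b := fun k => hb ⟨k, rfl⟩
  have hhist0 : hist x ((n:ℤ)+1) 0 = M n φ := by
    show x ((n:ℤ)+1-0) = _
    rw [sub_zero, heq]
  have hhist1 : ∀ k : ℕ, k ≠ 0 → hist x ((n:ℤ)+1) k = φ (k-1) := by
    intro k hk
    have : (n:ℤ) + 1 - k = (n:ℤ) - (k-1 : ℕ) := by push_cast; omega
    show x ((n:ℤ) + 1 - k) = _
    rw [this]
    exact sol.1 (k-1)
  have hmem : MemB γ (hist x ((n:ℤ)+1)) := by
    refine memB_of_bound (a := max ‖M n φ‖ b) fun k => ?_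
    rcases eq_or_ne k 0 with rfl | hk
    · simp only [wnorm, hhist0]
      calc ‖M n φ‖ * Real.exp (-(γ * ((0:ℕ):ℝ))) = ‖M n φ‖ := by norm_num
        _ ≤ _ := le_max_left _ _
    · rw [wnorm, hhist1 k hk]
      have hk1 : (1:ℝ) ≤ (k:ℝ) := by exact_mod_cast Nat.one_le_iff_ne_zero.mpr hk
      have hcast : ((k-1:ℕ):ℝ) = (k:ℝ) - 1 := by
        push_cast [Nat.cast_sub (Nat.one_le_iff_ne_zero.mpr hk)]
        ring
      calc ‖φ (k-1)‖ * Real.exp (-(γ * k))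
          ≤ ‖φ (k-1)‖ * Real.exp (-(γ * ((k:ℝ)-1))) := by
            refine mul_le_mul_of_nonneg_left (Real.exp_le_exp.mpr ?_) (norm_nonneg _)
            nlinarith
        _ = wnorm γ φ (k-1) := by rw [wnorm, hcast]
        _ ≤ b := hbk _
        _ ≤ max ‖M n φ‖ b := le_max_right _ _
  have h0 : ‖M n φ‖ = wnorm γ (hist x ((n:ℤ)+1)) 0 := by
    rw [wnorm, hhist0]
    norm_num
  have hB := h n φ hφ x sol (n+1) (Nat.le_succ n)
  have hBle : Bnorm γ (hist x (((n+1:ℕ)):ℤ)) ≤ K * Bnorm γ φ := by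
    refine hB.trans ?_
    have he : Real.exp (-(ν * (((n+1:ℕ):ℝ) - (n:ℝ)))) ≤ 1 := by
      rw [Real.exp_le_one_iff]
      push_cast
      nlinarith
    calc K * Real.exp (-(ν * (((n+1:ℕ):ℝ) - (n:ℝ)))) * Bnorm γ φ
        ≤ K * 1 * Bnorm γ φ := by
          refine mul_le_mul_of_nonneg_right ?_ (Bnorm_nonneg _ _)
          refine mul_le_mul_of_nonneg_left he (by linarith)
      _ = K * Bnorm γ φ := by ring
  have hc : ((n:ℤ)+1) = (((n+1:ℕ)):ℤ) := by push_cast; ring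
  rw [h0]
  calc wnorm γ (hist x ((n:ℤ)+1)) 0 ≤ Bnorm γ (hist x ((n:ℤ)+1)) := wnorm_le_Bnorm hmem 0
    _ ≤ K * Bnorm γ φ := by rw [hc]; exact hBle
/-! ### Bound on the forcing term -/

lemma gBound {γ δ : ℝ} {M L' : ℕ → ((ℕ → X) →ₗ[ℝ] X)}
    (hsub : ∀ n, Lsub L' n = Lsub M n)
    {KM : ℝ} (hKM0 : 0 ≤ KM)
    (hKM : ∀ (n : ℕ) (φ : ℕ → X), MemB γ φ → ‖M n φ‖ ≤ KM * Bnorm γ φ)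
    (j' : ℕ) {C' : ℝ}
    (hstar : ∀ (n : ℕ) (φ : ℕ → X), MemB δ φ → ‖L' n (Ptail j' φ)‖ ≤ C' * Bnorm δ φ)
    {C'' : ℝ}
    (hC'' : ∀ n, n < j' → ∀ φ : ℕ → X, MemB δ φ → ‖L' n φ‖ ≤ C'' * Bnorm δ φ)
    (τ : ℕ) (φ : ℕ → X) (hφ : MemB δ φ)
    (ψ : ℕ → X) (n : ℕ) (hn : τ ≤ n)
    (hψ : ∀ k : ℕ, ψ k = if n - τ ≤ k then φ (k - (n - τ)) else 0) :
    ‖L' n ψ‖ ≤ (max C' 0 + KM * Real.exp (|δ - γ| * j') + max C'' 0) *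
      Real.exp (-(δ * ((n:ℝ) - τ))) * Bnorm δ φ := by
  set B := Bnorm δ φ with hBdef
  have hB0 : 0 ≤ B := Bnorm_nonneg _ _
  set E : ℝ := Real.exp (-(δ * ((n:ℝ) - τ))) with hEdef
  have hE0 : 0 < E := Real.exp_pos _
  set Ctot : ℝ := max C' 0 + KM * Real.exp (|δ - γ| * j') + max C'' 0 with hCtotdef
  have hexp0 : (0:ℝ) ≤ Real.exp (|δ - γ| * j') := (Real.exp_pos _).le
  -- pointwise bound on ψ
  have hψB : ∀ k, wnorm δ ψ k ≤ E * B := by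
    intro k
    rw [wnorm, hψ k]
    by_cases hk : n - τ ≤ k
    · rw [if_pos hk]
      have hcast : (k:ℝ) = ((k - (n - τ) : ℕ) : ℝ) + ((n:ℝ) - τ) := by
        rw [← Nat.cast_sub hn, ← Nat.cast_add]
        norm_cast
        omega
      have : Real.exp (-(δ * k)) =
          Real.exp (-(δ * ((k - (n - τ) : ℕ) : ℝ))) * E := by
        rw [hEdef, ← Real.exp_add, hcast]
        ring_nf
      rw [this, ← mul_assoc]
      have h1 : ‖φ (k - (n - τ))‖ * Real.exp (-(δ * ((k - (n - τ) : ℕ) : ℝ))) ≤ B :=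
        wnorm_le_Bnorm hφ _
      calc ‖φ (k - (n - τ))‖ * Real.exp (-(δ * ((k - (n - τ) : ℕ) : ℝ))) * E
          ≤ B * E := mul_le_mul_of_nonneg_right h1 hE0.le
        _ = E * B := mul_comm _ _
    · rw [if_neg hk]
      simp only [norm_zero, zero_mul]
      positivity
  have hψmem : MemB δ ψ := memB_of_bound hψB
  have hψBn : Bnorm δ ψ ≤ E * B := Bnorm_le hψB
  have hψ0 : ∀ k, k < n - τ → ψ k = 0 := by
    intro k hk
    rw [hψ k, if_neg (by omega)]
  by_cases hcase : j' ≤ n - τ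
  · -- tail case
    have htail : Ptail j' ψ = ψ := by
      funext k
      rw [Ptail_apply]
      split
      · rfl
      · rw [hψ0 k (by omega)]
    have h1 : ‖L' n ψ‖ ≤ C' * Bnorm δ ψ := by
      have := hstar n ψ hψmem
      rwa [htail] at this
    calc ‖L' n ψ‖ ≤ C' * Bnorm δ ψ := h1
      _ ≤ max C' 0 * Bnorm δ ψ :=
          mul_le_mul_of_nonneg_right (le_max_left _ _) (Bnorm_nonneg _ _)
      _ ≤ max C' 0 * (E * B) :=
          mul_le_mul_of_nonneg_left hψBn (le_max_right _ _)
      _ ≤ Ctot * (E * B) := by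
          refine mul_le_mul_of_nonneg_right ?_ (by positivity)
          rw [hCtotdef]
          nlinarith [le_max_right C'' (0:ℝ), le_max_left C'' (0:ℝ), mul_nonneg hKM0 hexp0]
      _ = Ctot * E * B := by ring
  · -- head case : n - τ < j'
    push_neg at hcase
    set μ : ℕ → X := fun k => if k < j' then ψ k else 0 with hμdef
    have hsplit : L' n ψ = L' n (Ptail j' ψ) + L' n μ := by
      rw [← map_add]
      congr 1
      funext k
      simp only [Pi.add_apply, Ptail_apply, hμdef]
      by_cases hk : j' ≤ k
      · rw [if_pos hk, if_neg (by omega), add_zero]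
      · rw [if_neg hk, if_pos (by omega), zero_add]
    have hμψ : ∀ k, wnorm δ μ k ≤ wnorm δ ψ k := by
      intro k
      refine wnorm_mono (fun k => ?_) k
      by_cases h : k < j' <;> simp [hμdef, h]
    have hμmem : ∀ (ρ : ℝ), MemB ρ μ :=
      fun ρ => memB_of_finsupp (N := j') fun k hk => by
        simp only [hμdef]
        rw [if_neg (by omega)]
    have h1 : ‖L' n (Ptail j' ψ)‖ ≤ max C' 0 * (E * B) := by
      calc ‖L' n (Ptail j' ψ)‖ ≤ C' * Bnorm δ ψ := hstar n ψ hψmem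
        _ ≤ max C' 0 * Bnorm δ ψ :=
            mul_le_mul_of_nonneg_right (le_max_left _ _) (Bnorm_nonneg _ _)
        _ ≤ max C' 0 * (E * B) :=
            mul_le_mul_of_nonneg_left hψBn (le_max_right _ _)
    have h2 : ‖L' n μ‖ ≤ (KM * Real.exp (|δ - γ| * j') + max C'' 0) * (E * B) := by
      by_cases hnj : j' ≤ n
      · -- use the subdiagonal agreement and the uniform bound for M
        have hj1 : 1 ≤ j' := by omega
        have hn0 : n ≠ 0 := by omega
        have hμ0 : ∀ k, n ≤ k → μ k = 0 := by
          intro k hk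
          simp only [hμdef]
          rw [if_neg (by omega)]
        have heqμ : L' n μ = M n μ := apply_eq_of_sub hsub hn0 hμ0
        have hBγμ : Bnorm γ μ ≤ Real.exp (|δ - γ| * j') * (E * B) := by
          refine Bnorm_le fun k => ?_
          by_cases hk : k < j'
          · have hμk : μ k = ψ k := by simp only [hμdef]; rw [if_pos hk]
            have hsplitexp : Real.exp (-(γ * k)) =
                Real.exp (-(δ * k)) * Real.exp ((δ - γ) * k) := by
              rw [← Real.exp_add]; ring_nf
            have hle : Real.exp ((δ - γ) * k) ≤ Real.exp (|δ - γ| * j') := by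
              refine Real.exp_le_exp.mpr ?_
              have h1 : (δ - γ) * k ≤ |δ - γ| * k :=
                mul_le_mul_of_nonneg_right (le_abs_self _) (Nat.cast_nonneg _)
              have h2 : |δ - γ| * (k:ℝ) ≤ |δ - γ| * (j':ℝ) := by
                refine mul_le_mul_of_nonneg_left ?_ (abs_nonneg _)
                exact_mod_cast hk.le
              linarith
            calc wnorm γ μ k = ‖ψ k‖ * Real.exp (-(δ * k)) * Real.exp ((δ - γ) * k) := by
                  rw [wnorm, hμk, hsplitexp, mul_assoc]
              _ ≤ (E * B) * Real.exp (|δ - γ| * j') := by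
                  refine mul_le_mul ?_ hle (Real.exp_pos _).le (by positivity)
                  exact le_trans (le_of_eq (by rw [wnorm])) (hψB k)
              _ = Real.exp (|δ - γ| * j') * (E * B) := by ring
          · have : μ k = 0 := by simp only [hμdef]; rw [if_neg hk]
            rw [wnorm, this]
            simp only [norm_zero, zero_mul]
            positivity
        calc ‖L' n μ‖ = ‖M n μ‖ := by rw [heqμ]
          _ ≤ KM * Bnorm γ μ := hKM n μ (hμmem γ)
          _ ≤ KM * (Real.exp (|δ - γ| * j') * (E * B)) :=
              mul_le_mul_of_nonneg_left hBγμ hKM0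
          _ ≤ (KM * Real.exp (|δ - γ| * j') + max C'' 0) * (E * B) := by
              nlinarith [le_max_right C'' (0:ℝ), mul_nonneg hE0.le hB0]
      · -- n < j' : use the per-operator bound
        push_neg at hnj
        have hBδμ : Bnorm δ μ ≤ E * B :=
          Bnorm_le fun k => (hμψ k).trans (hψB k)
        calc ‖L' n μ‖ ≤ C'' * Bnorm δ μ := hC'' n hnj μ (hμmem δ)
          _ ≤ max C'' 0 * Bnorm δ μ :=
              mul_le_mul_of_nonneg_right (le_max_left _ _) (Bnorm_nonneg _ _)
          _ ≤ max C'' 0 * (E * B) :=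
              mul_le_mul_of_nonneg_left hBδμ (le_max_right _ _)
          _ ≤ (KM * Real.exp (|δ - γ| * j') + max C'' 0) * (E * B) := by
              nlinarith [mul_nonneg hKM0 hexp0, mul_nonneg hE0.le hB0]
    calc ‖L' n ψ‖ ≤ ‖L' n (Ptail j' ψ)‖ + ‖L' n μ‖ := by
          rw [hsplit]; exact norm_add_le _ _
      _ ≤ max C' 0 * (E * B) + (KM * Real.exp (|δ - γ| * j') + max C'' 0) * (E * B) :=
          add_le_add h1 h2
      _ = Ctot * E * B := by rw [hCtotdef]; ring
/-! ### Main transference lemma -/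

set_option maxHeartbeats 2000000 in
lemma mainLemma {γ δ : ℝ} (hγ : 0 < γ) (hδ : 0 < δ) {M L' : ℕ → ((ℕ → X) →ₗ[ℝ] X)}
    (hM : UESinB γ M) (hL' : ∀ n, OpBounded δ (L' n))
    (hsub : ∀ n, Lsub L' n = Lsub M n) (hstar' : StarCond δ L') : UESinB δ L' := by
  obtain ⟨KM, hKM1, hKM⟩ := uniformOpBound hγ hM
  obtain ⟨K, hK1, ν, hν, hUES⟩ := hM
  obtain ⟨j', C', hstar⟩ := hstar'
  obtain ⟨C'', hC''⟩ : ∃ C'' : ℝ, ∀ n, n < j' → ∀ φ : ℕ → X, MemB δ φ →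
      ‖L' n φ‖ ≤ C'' * Bnorm δ φ := by
    choose Cf hCf using hL'
    refine ⟨∑ i ∈ Finset.range j', max (Cf i) 0, fun n hn φ hφ => ?_⟩
    have hB0 := Bnorm_nonneg δ φ
    calc ‖L' n φ‖ ≤ Cf n * Bnorm δ φ := hCf n φ hφ
      _ ≤ max (Cf n) 0 * Bnorm δ φ := mul_le_mul_of_nonneg_right (le_max_left _ _) hB0
      _ ≤ (∑ i ∈ Finset.range j', max (Cf i) 0) * Bnorm δ φ := by
          refine mul_le_mul_of_nonneg_right ?_ hB0
          exact Finset.single_le_sum (fun i _ => le_max_right (Cf i) 0)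
            (Finset.mem_range.mpr hn)
  have hKM0 : (0:ℝ) ≤ KM := le_trans zero_le_one hKM1
  have hK0 : (0:ℝ) ≤ K := le_trans zero_le_one hK1
  set C₁ : ℝ := max C' 0 + KM * Real.exp (|δ - γ| * j') + max C'' 0 with hC₁def
  have hC₁0 : 0 ≤ C₁ := by
    rw [hC₁def]
    have h1 := mul_nonneg hKM0 (Real.exp_pos (|δ - γ| * j')).le
    nlinarith [le_max_right C' (0:ℝ), le_max_right C'' (0:ℝ)]
  set θ : ℝ := min ν δ with hθdef
  have hθ : 0 < θ := lt_min hν hδ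
  have hθν : θ ≤ ν := min_le_left _ _
  have hθδ : θ ≤ δ := min_le_right _ _
  set ε : ℝ := θ / 2 with hεdef
  have hε : 0 < ε := by positivity
  have hεδ : ε ≤ δ := by rw [hεdef]; linarith
  set K₄ : ℝ := K * C₁ * Real.exp (ν + δ) * (2 / θ) with hK₄def
  set K₅ : ℝ := max 1 K₄ with hK₅def
  have hK₅1 : (1:ℝ) ≤ K₅ := le_max_left _ _
  have hK₅0 : (0:ℝ) ≤ K₅ := by linarith
  refine ⟨K₅, hK₅1, ε, hε, ?_⟩
  intro τ φ hφ x sol n hn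
  set B := Bnorm δ φ with hBdef
  have hB0 : 0 ≤ B := Bnorm_nonneg _ _
  -- the forcing terms
  set g : ℕ → X := fun m => L' m (Ptail (m - τ) (hist x (m:ℤ))) with hgdef
  have hψform : ∀ m : ℕ, τ ≤ m → ∀ k : ℕ,
      Ptail (m - τ) (hist x (m:ℤ)) k = if m - τ ≤ k then φ (k - (m - τ)) else 0 := by
    intro m hm k
    rw [Ptail_apply]
    by_cases hk : m - τ ≤ k
    · rw [if_pos hk, if_pos hk]
      have hzeq : (m:ℤ) - k = (τ:ℤ) - ((k - (m - τ) : ℕ) : ℤ) := by omega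
      show x ((m:ℤ) - k) = _
      rw [hzeq]
      exact sol.1 _
    · rw [if_neg hk, if_neg hk]
  have hg : ∀ m : ℕ, τ ≤ m → ‖g m‖ ≤ C₁ * Real.exp (-(δ * ((m:ℝ) - τ))) * B := by
    intro m hm
    exact gBound hsub hKM0 hKM j' hstar hC'' τ φ hφ _ m hm (hψform m hm)
  -- the cut-off solution
  set w : ℤ → X := fun t => if t ≤ (τ:ℤ) then 0 else x t with hwdef
  have hw0 : ∀ t : ℤ, t ≤ (τ:ℤ) → w t = 0 := fun t ht => if_pos ht
  have hwx : ∀ t : ℤ, (τ:ℤ) < t → w t = x t := fun t ht => if_neg (by omega)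
  have hhistw : ∀ m : ℕ, τ ≤ m → ∀ k : ℕ,
      hist x (m:ℤ) k = hist w (m:ℤ) k + Ptail (m - τ) (hist x (m:ℤ)) k := by
    intro m hm k
    show x ((m:ℤ) - k) = w ((m:ℤ) - k) + _
    rw [Ptail_apply]
    by_cases hk : m - τ ≤ k
    · rw [if_pos hk, hw0 _ (by omega), zero_add]
      rfl
    · rw [if_neg hk, hwx _ (by omega), add_zero]
  have hweq : ∀ m : ℕ, τ ≤ m → w ((m:ℤ)+1) = M m (hist w (m:ℤ)) + g m := by
    intro m hm
    have hx1 : x ((m:ℤ)+1) = L' m (hist x (m:ℤ)) := by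
      have := sol.2 m hm
      simpa using this
    have hsum : hist x (m:ℤ) = hist w (m:ℤ) + Ptail (m - τ) (hist x (m:ℤ)) :=
      funext (hhistw m hm)
    have hwzero : ∀ k, m ≤ k → hist w (m:ℤ) k = 0 := by
      intro k hk
      exact hw0 _ (by omega)
    have hLM : L' m (hist w (m:ℤ)) = M m (hist w (m:ℤ)) := by
      rcases eq_or_ne m 0 with rfl | hm0
      · have hz : hist w ((0:ℕ):ℤ) = 0 := funext fun k => hw0 _ (by omega)
        rw [hz, map_zero, map_zero]
      · exact apply_eq_of_sub hsub hm0 hwzero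
    rw [show w ((m:ℤ)+1) = x ((m:ℤ)+1) from hwx _ (by omega), hx1, hsum, map_add, hLM]
  -- the elementary solutions
  set u : ℕ → ℤ → X := fun k => mkSol M (k+1) (Ecoord 0 (g k)) with hudef
  have usol : ∀ k, IsSolution M 0 (k+1) (Ecoord 0 (g k)) (u k) :=
    fun k => mkSol_isSol M (k+1) (Ecoord 0 (g k))
  have u0 : ∀ (k : ℕ) (t : ℤ), t ≤ (k:ℤ) → u k t = 0 := by
    intro k t ht
    have h1 := (usol k).1 ((k:ℤ)+1 - t).toNat
    rw [show (((k+1:ℕ):ℤ) - ((((k:ℤ)+1 - t).toNat : ℕ) : ℤ)) = t by omega] at h1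
    rw [h1, Ecoord_apply, if_neg (by omega)]
  have ugk : ∀ k : ℕ, u k ((k:ℤ)+1) = g k := by
    intro k
    have h1 := (usol k).1 0
    rw [show (((k+1:ℕ):ℤ) - ((0:ℕ):ℤ)) = (k:ℤ)+1 by push_cast; ring] at h1
    rw [h1, Ecoord_apply, if_pos rfl]
  -- representation of w as a superposition
  have hrep : ∀ s : ℕ, ∀ t : ℤ, t ≤ (τ:ℤ) + s →
      w t = ∑ k ∈ Finset.Ico τ (τ + s), u k t := by
    intro s
    induction s with
    | zero =>
      intro t ht
      rw [Nat.add_zero, Finset.Ico_self, Finset.sum_empty, hw0 t (by omega)]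
    | succ s ih =>
      intro t ht
      rcases le_or_gt t ((τ:ℤ) + s) with hts | hts
      · have h2 : u (τ+s) t = 0 := u0 (τ+s) t (by push_cast; omega)
        rw [show τ + (s+1) = (τ + s) + 1 from rfl,
            Finset.sum_Ico_succ_top (Nat.le_add_right τ s), h2, add_zero]
        exact ih t hts
      · have htm : t = ((τ + s : ℕ):ℤ) + 1 := by push_cast; omega
        have hm : τ ≤ τ + s := Nat.le_add_right τ s
        have hhisteq : hist w ((τ+s : ℕ):ℤ) =
            ∑ k ∈ Finset.Ico τ (τ+s), hist (u k) ((τ+s : ℕ):ℤ) := by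
          funext jj
          rw [Finset.sum_apply]
          show w (((τ+s : ℕ):ℤ) - jj) = _
          rw [ih (((τ+s : ℕ):ℤ) - jj) (by push_cast; omega)]
          rfl
        have hstep : ∀ k ∈ Finset.Ico τ (τ+s),
            M (τ+s) (hist (u k) ((τ+s : ℕ):ℤ)) = u k (((τ+s : ℕ):ℤ)+1) := by
          intro k hk
          rw [Finset.mem_Ico] at hk
          have h2 := (usol k).2 (τ+s) (by omega)
          simpa using h2.symm
        rw [htm, hweq (τ+s) hm, hhisteq, map_sum, Finset.sum_congr rfl hstep,
            show τ + (s+1) = (τ+s) + 1 from rfl,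
            Finset.sum_Ico_succ_top (by omega : τ ≤ τ+s), ← ugk (τ+s)]
  -- pointwise exponential decay
  have hpoint : ∀ m : ℕ, τ ≤ m →
      ‖x (m:ℤ)‖ ≤ K₅ * Real.exp (-(ε * ((m:ℝ) - τ))) * B := by
    intro m hm
    rcases eq_or_lt_of_le hm with heq | hlt
    · subst heq
      have hx0 : x ((τ:ℕ):ℤ) = φ 0 := by
        have h1 := sol.1 0
        simpa using h1
      have h1 : ‖φ 0‖ ≤ B := by
        have h2 := wnorm_le_Bnorm hφ 0
        rw [wnorm] at h2
        simpa using h2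
      rw [hx0]
      have he1 : Real.exp (-(ε * ((τ:ℝ) - (τ:ℝ)))) = 1 := by norm_num
      rw [he1]
      nlinarith
    · have hxw : x (m:ℤ) = w (m:ℤ) := (hwx (m:ℤ) (by omega)).symm
      have hrepm := hrep (m - τ) (m:ℤ) (by push_cast; omega)
      rw [show τ + (m - τ) = m by omega] at hrepm
      have hterm : ∀ k ∈ Finset.Ico τ m,
          ‖u k (m:ℤ)‖ ≤ K * C₁ * Real.exp (ν + δ) *
            Real.exp (-(θ * ((m:ℝ) - τ))) * B := by
        intro k hk
        rw [Finset.mem_Ico] at hk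
        have hmemE : MemB γ (Ecoord 0 (g k)) :=
          memB_of_finsupp (N := 1) fun j hj => by
            rw [Ecoord_apply, if_neg (by omega)]
        have hmemH : MemB γ (hist (u k) (m:ℤ)) :=
          memB_of_finsupp (N := m) fun j hj => by
            show u k ((m:ℤ) - j) = 0
            exact u0 k _ (by omega)
        have h1 : ‖u k (m:ℤ)‖ ≤ Bnorm γ (hist (u k) (m:ℤ)) := by
          have h2 := wnorm_le_Bnorm hmemH 0
          rw [wnorm] at h2
          simpa [hist] using h2
        have h2 := hUES (k+1) (Ecoord 0 (g k)) hmemE (u k) (usol k) m (by omega)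
        have h3 : Bnorm γ (Ecoord 0 (g k)) ≤ ‖g k‖ := Bnorm_Ecoord_le γ (g k)
        have h4 := hg k hk.1
        have hkc : ((k+1:ℕ):ℝ) = (k:ℝ) + 1 := by push_cast; ring
        have hkτ : (τ:ℝ) ≤ (k:ℝ) := by exact_mod_cast hk.1
        have hkm : (k:ℝ) + 1 ≤ (m:ℝ) := by exact_mod_cast hk.2
        have hE : Real.exp (-(ν * ((m:ℝ) - ((k+1:ℕ):ℝ)))) *
            Real.exp (-(δ * ((k:ℝ) - τ))) ≤
            Real.exp (ν + δ) * Real.exp (-(θ * ((m:ℝ) - τ))) := by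
          rw [← Real.exp_add, ← Real.exp_add, hkc]
          apply Real.exp_le_exp.mpr
          nlinarith [mul_nonneg (by linarith : (0:ℝ) ≤ ν - θ)
              (by linarith : (0:ℝ) ≤ (m:ℝ) - ((k:ℝ)+1)),
            mul_nonneg (by linarith : (0:ℝ) ≤ δ - θ)
              (by linarith : (0:ℝ) ≤ (k:ℝ) - τ)]
        have h5 : (0:ℝ) ≤ K * Real.exp (-(ν * ((m:ℝ) - ((k+1:ℕ):ℝ)))) :=
          mul_nonneg hK0 (Real.exp_pos _).le
        calc ‖u k (m:ℤ)‖ ≤ Bnorm γ (hist (u k) (m:ℤ)) := h1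
          _ ≤ K * Real.exp (-(ν * ((m:ℝ) - ((k+1:ℕ):ℝ)))) * Bnorm γ (Ecoord 0 (g k)) := h2
          _ ≤ K * Real.exp (-(ν * ((m:ℝ) - ((k+1:ℕ):ℝ)))) * ‖g k‖ :=
              mul_le_mul_of_nonneg_left h3 h5
          _ ≤ K * Real.exp (-(ν * ((m:ℝ) - ((k+1:ℕ):ℝ)))) *
              (C₁ * Real.exp (-(δ * ((k:ℝ) - τ))) * B) :=
              mul_le_mul_of_nonneg_left h4 h5
          _ = (K * C₁ * B) * (Real.exp (-(ν * ((m:ℝ) - ((k+1:ℕ):ℝ)))) *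
              Real.exp (-(δ * ((k:ℝ) - τ)))) := by ring
          _ ≤ (K * C₁ * B) * (Real.exp (ν + δ) * Real.exp (-(θ * ((m:ℝ) - τ)))) := by
              refine mul_le_mul_of_nonneg_left hE ?_
              exact mul_nonneg (mul_nonneg hK0 hC₁0) hB0
          _ = K * C₁ * Real.exp (ν + δ) * Real.exp (-(θ * ((m:ℝ) - τ))) * B := by ring
      have hsum : ‖x (m:ℤ)‖ ≤ ((Finset.Ico τ m).card : ℝ) *
          (K * C₁ * Real.exp (ν + δ) * Real.exp (-(θ * ((m:ℝ) - τ))) * B) := by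
        rw [hxw, hrepm]
        refine (norm_sum_le _ _).trans ?_
        calc ∑ k ∈ Finset.Ico τ m, ‖u k (m:ℤ)‖
            ≤ (Finset.Ico τ m).card •
              (K * C₁ * Real.exp (ν + δ) * Real.exp (-(θ * ((m:ℝ) - τ))) * B) :=
              Finset.sum_le_card_nsmul _ _ _ hterm
          _ = _ := nsmul_eq_mul _ _
      have hcard : ((Finset.Ico τ m).card : ℝ) = (m:ℝ) - τ := by
        rw [Nat.card_Ico, Nat.cast_sub hm]
      set s : ℝ := (m:ℝ) - (τ:ℝ) with hsdef
      have hs1 : (1:ℝ) ≤ s := by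
        rw [hsdef]
        have : (τ:ℝ) + 1 ≤ (m:ℝ) := by exact_mod_cast hlt
        linarith
      have hθε : θ = 2 * ε := by rw [hεdef]; ring
      have hkey : s * Real.exp (-(θ * s)) ≤ (2/θ) * Real.exp (-(ε * s)) := by
        have hsplit : Real.exp (-(θ * s)) = Real.exp (-(ε * s)) * Real.exp (-(ε * s)) := by
          rw [← Real.exp_add, hθε]
          ring_nf
        have hexp1 : ε * s + 1 ≤ Real.exp (ε * s) := Real.add_one_le_exp _
        have hh : Real.exp (-(ε * s)) * Real.exp (ε * s) = 1 := by
          rw [← Real.exp_add]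
          simp
        have h2 : s * Real.exp (-(ε * s)) * θ ≤ 2 := by
          rw [hθε]
          nlinarith [(Real.exp_pos (-(ε * s))).le,
            mul_le_mul_of_nonneg_right hexp1 (Real.exp_pos (-(ε * s))).le]
        have h3 : s * Real.exp (-(ε * s)) ≤ 2/θ := by
          rw [le_div_iff₀ hθ]
          exact h2
        calc s * Real.exp (-(θ * s)) = (s * Real.exp (-(ε * s))) * Real.exp (-(ε * s)) := by
              rw [hsplit]; ring
          _ ≤ (2/θ) * Real.exp (-(ε * s)) :=
              mul_le_mul_of_nonneg_right h3 (Real.exp_pos _).le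
      have hKC : (0:ℝ) ≤ K * C₁ * Real.exp (ν + δ) * B := by
        have := (Real.exp_pos (ν + δ)).le
        exact mul_nonneg (mul_nonneg (mul_nonneg hK0 hC₁0) this) hB0
      calc ‖x (m:ℤ)‖ ≤ ((Finset.Ico τ m).card : ℝ) *
            (K * C₁ * Real.exp (ν + δ) * Real.exp (-(θ * ((m:ℝ) - τ))) * B) := hsum
        _ = (K * C₁ * Real.exp (ν + δ) * B) * (s * Real.exp (-(θ * s))) := by
            rw [hcard]; ring
        _ ≤ (K * C₁ * Real.exp (ν + δ) * B) * ((2/θ) * Real.exp (-(ε * s))) :=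
            mul_le_mul_of_nonneg_left hkey hKC
        _ = K₄ * Real.exp (-(ε * s)) * B := by rw [hK₄def]; ring
        _ ≤ K₅ * Real.exp (-(ε * s)) * B := by
            refine mul_le_mul_of_nonneg_right
              (mul_le_mul_of_nonneg_right (le_max_right 1 K₄) (Real.exp_pos _).le) hB0
  -- final estimate on the history norm
  refine Bnorm_le fun k => ?_
  by_cases hk : k < n - τ
  · have hm2 : τ ≤ n - k := by omega
    have hzc : (n:ℤ) - k = ((n - k : ℕ) : ℤ) := by omega
    have hp := hpoint (n - k) hm2
    have hc1 : ((n - k : ℕ):ℝ) = (n:ℝ) - k := by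
      rw [Nat.cast_sub (by omega)]
    rw [wnorm]
    show ‖x ((n:ℤ) - k)‖ * Real.exp (-(δ * k)) ≤ _
    rw [hzc]
    have hh : Real.exp (-(ε * ((n:ℝ) - k - τ))) * Real.exp (-(δ * k)) ≤
        Real.exp (-(ε * ((n:ℝ) - τ))) := by
      rw [← Real.exp_add]
      apply Real.exp_le_exp.mpr
      have hk0 : (0:ℝ) ≤ (k:ℝ) := Nat.cast_nonneg k
      nlinarith [mul_nonneg (sub_nonneg.mpr hεδ) hk0]
    calc ‖x (((n - k : ℕ)):ℤ)‖ * Real.exp (-(δ * k))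
        ≤ (K₅ * Real.exp (-(ε * (((n - k : ℕ):ℝ) - τ))) * B) * Real.exp (-(δ * k)) :=
          mul_le_mul_of_nonneg_right hp (Real.exp_pos _).le
      _ = K₅ * B * (Real.exp (-(ε * ((n:ℝ) - k - τ))) * Real.exp (-(δ * k))) := by
          rw [hc1]; ring
      _ ≤ K₅ * B * Real.exp (-(ε * ((n:ℝ) - τ))) :=
          mul_le_mul_of_nonneg_left hh (mul_nonneg hK₅0 hB0)
      _ = K₅ * Real.exp (-(ε * ((n:ℝ) - τ))) * B := by ring
  · push_neg at hk
    have hψk : hist x (n:ℤ) k = φ (k - (n - τ)) := by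
      have hzeq : (n:ℤ) - k = (τ:ℤ) - ((k - (n - τ) : ℕ) : ℤ) := by omega
      show x ((n:ℤ) - k) = _
      rw [hzeq]
      exact sol.1 _
    have hcast : (k:ℝ) = ((k - (n - τ) : ℕ) : ℝ) + ((n:ℝ) - τ) := by
      rw [← Nat.cast_sub hn, ← Nat.cast_add]
      norm_cast
      omega
    have hsplitE : Real.exp (-(δ * k)) =
        Real.exp (-(δ * ((k - (n - τ) : ℕ):ℝ))) * Real.exp (-(δ * ((n:ℝ) - τ))) := by
      rw [← Real.exp_add, hcast]
      ring_nf
    have h1 : wnorm δ φ (k - (n - τ)) ≤ B := wnorm_le_Bnorm hφ _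
    have hnτ : (0:ℝ) ≤ (n:ℝ) - τ := by
      have : (τ:ℝ) ≤ (n:ℝ) := by exact_mod_cast hn
      linarith
    have h2 : Real.exp (-(δ * ((n:ℝ) - τ))) ≤ Real.exp (-(ε * ((n:ℝ) - τ))) := by
      apply Real.exp_le_exp.mpr
      nlinarith [mul_nonneg (sub_nonneg.mpr hεδ) hnτ]
    rw [wnorm, hψk, hsplitE]
    calc ‖φ (k - (n - τ))‖ * (Real.exp (-(δ * ((k - (n - τ) : ℕ):ℝ))) *
          Real.exp (-(δ * ((n:ℝ) - τ))))
        = wnorm δ φ (k - (n - τ)) * Real.exp (-(δ * ((n:ℝ) - τ))) := by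
          rw [wnorm]; ring
      _ ≤ B * Real.exp (-(ε * ((n:ℝ) - τ))) :=
          mul_le_mul h1 h2 (Real.exp_pos _).le hB0
      _ ≤ K₅ * Real.exp (-(ε * ((n:ℝ) - τ))) * B := by
          nlinarith [mul_nonneg (mul_nonneg (sub_nonneg.mpr hK₅1)
            (Real.exp_pos (-(ε * ((n:ℝ) - τ)))).le) hB0]
/-- Theorem 5.6, UES case: under condition (★) with `γ > 0`, UES in `B^γ`
of the system ⟺ UES in `B^γ` of the associated subdiagonal system ⟺ UES in `B^δ` of
every system `L'` on `B^δ` (`δ > 0`) with the same subdiagonal part satisfying (★). -/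
theorem statement18 (γ : ℝ) (hγ : 0 < γ) (L : ℕ → ((ℕ → X) →ₗ[ℝ] X))
    (hL : ∀ n, OpBounded γ (L n)) (hstar : StarCond γ L) :
    (UESinB γ L ↔ UESinB γ (Lsub L)) ∧
    (UESinB γ L ↔
      ∀ δ : ℝ, 0 < δ → ∀ L' : ℕ → ((ℕ → X) →ₗ[ℝ] X),
        (∀ n, OpBounded δ (L' n)) → (∀ n, Lsub L' n = Lsub L n) →
        StarCond δ L' → UESinB δ L') := by
  have hsubL : ∀ n, Lsub (Lsub L) n = Lsub L n := Lsub_idem L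
  constructor
  · constructor
    · intro h
      exact mainLemma hγ hγ h (opBounded_Lsub hL) hsubL (star_Lsub hstar)
    · intro h
      exact mainLemma hγ hγ h hL (fun n => (hsubL n).symm) hstar
  · constructor
    · intro h δ hδ L' hL' hsub' hstar'
      exact mainLemma hγ hδ h hL' hsub' hstar'
    · intro h
      exact h γ hγ L hL (fun n => rfl) hstar

end BP
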